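/- Let K be a 3DM instance and σ(K) the associated spanUFP instance. For any nodes x_i ∈ X, y_j ∈ Y, z_k ∈ Z, any hyperedge h_ℓ ∈ E (not necessarily with h_ℓ = (x_i,y_j,z_k)), and any block I of σ(K), there is a feasible schedule inside I of either the seven tasks t_L(x_i), t_R(x_i), t_L(y_j), t_R(y_j), t_L(z_k), t_R(z_k), t_L(h_ℓ), or the seven tasks t_L(x_i), t_R(x_i), t_L(y_j), t_R(y_j), t_L(z_k), t_R(z_k), t_R(h_ℓ). -/

import Mathlib

/-- `ρ = max {29, 3q}`. -/
def rho (q : ℕ) : ℕ := max 29 (3 * q)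

/-- The number `x'_i = iρ + 1` associated to the node `x_i`. -/
def xnum (q i : ℕ) : ℤ := (i : ℤ) * (rho q : ℤ) + 1

/-- The number `y'_j = jρ² + 2` associated to the node `y_j`. -/
def ynum (q j : ℕ) : ℤ := (j : ℤ) * (rho q : ℤ) ^ 2 + 2

/-- The number `z'_k = kρ³ + 4` associated to the node `z_k`. -/
def znum (q k : ℕ) : ℤ := (k : ℤ) * (rho q : ℤ) ^ 3 + 4

/-- The number `h'_ℓ = -iρ - jρ² - kρ³ - 7` associated to the hyperedge `h_ℓ = (x_i, y_j, z_k)`. -/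
def hnum (q : ℕ) (h : ℕ × ℕ × ℕ) : ℤ :=
  -((h.1 : ℤ) * (rho q : ℤ)) - (h.2.1 : ℤ) * (rho q : ℤ) ^ 2 - (h.2.2 : ℤ) * (rho q : ℤ) ^ 3 - 7

/-- The set `Q(K)` of the `3q + m` integers associated to a 3DM instance `K = (q, E)`. -/
def QK (q : ℕ) (E : Finset (ℕ × ℕ × ℕ)) : Finset ℤ :=
  ((Finset.Icc 1 q).image (xnum q)) ∪ ((Finset.Icc 1 q).image (ynum q)) ∪
    ((Finset.Icc 1 q).image (znum q)) ∪ (E.image (hnum q))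

/-- `(q, E)` is a 3DM instance: every hyperedge is a triple of node indices in `{1, …, q}`
(`X`, `Y` and `Z` are identified with `{1, …, q}`). -/
def ValidE (q : ℕ) (E : Finset (ℕ × ℕ × ℕ)) : Prop :=
  ∀ h ∈ E, h.1 ∈ Finset.Icc 1 q ∧ h.2.1 ∈ Finset.Icc 1 q ∧ h.2.2 ∈ Finset.Icc 1 q

/-- A hypermatching: no two distinct hyperedges share a node. -/
def Matching (M : Finset (ℕ × ℕ × ℕ)) : Prop :=
  ∀ h ∈ M, ∀ h' ∈ M, h ≠ h' → h.1 ≠ h'.1 ∧ h.2.1 ≠ h'.2.1 ∧ h.2.2 ≠ h'.2.2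

/-- `μ = 1 + max_{u' ∈ Q(K)} 10|u'|`. -/
def mu (q : ℕ) (E : Finset (ℕ × ℕ × ℕ)) : ℕ :=
  1 + (QK q E).sup (fun u => 10 * u.natAbs)

/-- `A = 5μ + 4`. -/
def Aval (q : ℕ) (E : Finset (ℕ × ℕ × ℕ)) : ℕ := 5 * mu q E + 4

/-- The path of `σ(K)` has `(2A+1)q - 1` edges; edges are identified with the
integers `0, 1, …, (2A+1)q - 2`. -/
def numEdges (q : ℕ) (E : Finset (ℕ × ℕ × ℕ)) : ℤ := (2 * (Aval q E : ℤ) + 1) * q - 1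

/-- The capacity profile of `σ(K)`: within each block of `2A` consecutive edges, the
leftmost `A` edges have capacity `4A + 4` and the rightmost `A` edges have capacity `4A`;
blocks are separated by single edges of capacity `0`. -/
def cap (q : ℕ) (E : Finset (ℕ × ℕ × ℕ)) (e : ℤ) : ℤ :=
  let A : ℤ := (Aval q E : ℤ)
  let r := e % (2 * A + 1)
  if r < A then 4 * A + 4 else if r < 2 * A then 4 * A else 0

/-- An element `u ∈ X ∪ Y ∪ Z ∪ E` of the 3DM instance. -/
inductive Elem where
  | X : ℕ → Elem
  | Y : ℕ → Elem
  | Z : ℕ → Elem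
  | H : ℕ × ℕ × ℕ → Elem
deriving DecidableEq

/-- The number `u' ∈ Q(K)` associated to `u ∈ X ∪ Y ∪ Z ∪ E`. -/
def elemVal (q : ℕ) : Elem → ℤ
  | .X i => xnum q i
  | .Y j => ynum q j
  | .Z k => znum q k
  | .H h => hnum q h

/-- `u` is an actual element of the instance `(q, E)`. -/
def validElem (q : ℕ) (E : Finset (ℕ × ℕ × ℕ)) : Elem → Prop
  | .X i => i ∈ Finset.Icc 1 q
  | .Y j => j ∈ Finset.Icc 1 q
  | .Z k => k ∈ Finset.Icc 1 q
  | .H h => h ∈ E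

/-- A task of `σ(K)` is a pair `(u, s)` with `u ∈ X ∪ Y ∪ Z ∪ E`; `s = true` encodes the
task `t_L(u)` and `s = false` encodes the task `t_R(u)`. All tasks have weight 1. -/
abbrev UTask := Elem × Bool

/-- The length of a task: `t_L(u)` has length `A - 10u'`, `t_R(u)` has length `A + 10u'`. -/
def taskLen (q : ℕ) (E : Finset (ℕ × ℕ × ℕ)) (t : UTask) : ℤ :=
  if t.2 then (Aval q E : ℤ) - 10 * elemVal q t.1
  else (Aval q E : ℤ) + 10 * elemVal q t.1

/-- The demand of a task: `t_L(u)` has demand `A + 10u' + 1`, `t_R(u)` has demand `A - 10u'`. -/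
def taskDem (q : ℕ) (E : Finset (ℕ × ℕ × ℕ)) (t : UTask) : ℤ :=
  if t.2 then (Aval q E : ℤ) + 10 * elemVal q t.1 + 1
  else (Aval q E : ℤ) - 10 * elemVal q t.1

/-- The schedule of task `t`: the contiguous interval of `taskLen` edges starting at
edge `start t`. -/
noncomputable def sched (q : ℕ) (E : Finset (ℕ × ℕ × ℕ)) (start : UTask → ℤ) (t : UTask) : Finset ℤ :=
  Finset.Ico (start t) (start t + taskLen q E t)

/-- `(S, start)` is a feasible solution of `σ(K)`: every selected task is a task of the
instance, is scheduled (contiguously, with exactly its length) within the path, and on every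
edge `e` the total demand of the selected tasks whose schedule contains `e` is at most the
capacity of `e`. -/
def Feasible (q : ℕ) (E : Finset (ℕ × ℕ × ℕ)) (S : Finset UTask) (start : UTask → ℤ) : Prop :=
  (∀ t ∈ S, validElem q E t.1) ∧
  (∀ t ∈ S, 0 ≤ start t ∧ start t + taskLen q E t ≤ numEdges q E) ∧
  (∀ e : ℤ, 0 ≤ e → e < numEdges q E →
    ∑ t ∈ S.filter (fun t => e ∈ sched q E start t), taskDem q E t ≤ cap q E e)

/-- The first edge of the `b`-th block (`b ∈ {0, …, q-1}`). -/
def blockStart (q : ℕ) (E : Finset (ℕ × ℕ × ℕ)) (b : ℕ) : ℤ :=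
  (b : ℤ) * (2 * (Aval q E : ℤ) + 1)

/-- The `b`-th block of `2A` consecutive edges (`b ∈ {0, …, q-1}`). -/
noncomputable def block (q : ℕ) (E : Finset (ℕ × ℕ × ℕ)) (b : ℕ) : Finset ℤ :=
  Finset.Ico (blockStart q E b) (blockStart q E b + 2 * (Aval q E : ℤ))

/-- The seven tasks `t_L(x_i), t_R(x_i), t_L(y_j), t_R(y_j), t_L(z_k), t_R(z_k), t_L(h_ℓ)`. -/
def sevenTasksL (i j l : ℕ) (h : ℕ × ℕ × ℕ) : Finset UTask :=
  {(Elem.X i, true), (Elem.X i, false), (Elem.Y j, true), (Elem.Y j, false),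
   (Elem.Z l, true), (Elem.Z l, false), (Elem.H h, true)}

/-- The seven tasks `t_L(x_i), t_R(x_i), t_L(y_j), t_R(y_j), t_L(z_k), t_R(z_k), t_R(h_ℓ)`. -/
def sevenTasksR (i j l : ℕ) (h : ℕ × ℕ × ℕ) : Finset UTask :=
  {(Elem.X i, true), (Elem.X i, false), (Elem.Y j, true), (Elem.Y j, false),
   (Elem.Z l, true), (Elem.Z l, false), (Elem.H h, false)}

/-!
Put every `t_L(u)` at the left end of the block and every `t_R(u)` at its right end. Since the
lengths of `t_L(u)` and `t_R(u)` add up to `2A`, the two tasks of a node tile the block: on the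
left half a node `u` loads at most `A + 10u' + 1`, on the right half exactly `A - 10u'`. Write
`D = 10(x' + y' + z' + h')` and recall `h' < 0 < x', y', z'`. If `D ≤ 0`, add `t_L(h)`, which
covers the left half: the load there is at most `4A + 4 + D`, and on the right half at most
`4A + 1 + D - 20(x' + y' + z') < 4A`. Otherwise add `t_R(h)`, which misses the left half: the
load there is at most `3A + 3 + 10(x' + y' + z') ≤ 4A + 4` as `10|u'| < μ` and `A = 5μ + 4`,
and on the right half at most `4A - D`.
-/

section Bounds

variable {q : ℕ} {E : Finset (ℕ × ℕ × ℕ)}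

lemma elemVal_mem_QK : ∀ {u : Elem}, validElem q E u → elemVal q u ∈ QK q E
  | .X _, hu => by
    simp only [QK, Finset.mem_union]
    exact .inl (.inl (.inl (Finset.mem_image_of_mem _ hu)))
  | .Y _, hu => by
    simp only [QK, Finset.mem_union]
    exact .inl (.inl (.inr (Finset.mem_image_of_mem _ hu)))
  | .Z _, hu => by
    simp only [QK, Finset.mem_union]
    exact .inl (.inr (Finset.mem_image_of_mem _ hu))
  | .H _, hu => by
    simp only [QK, Finset.mem_union]
    exact .inr (Finset.mem_image_of_mem _ hu)

lemma ten_mul_abs_elemVal_lt_mu {u : Elem} (hu : validElem q E u) :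
    10 * |elemVal q u| < mu q E := by
  have := Finset.le_sup (f := fun v : ℤ => 10 * v.natAbs) (elemVal_mem_QK hu)
  rw [Int.abs_eq_natAbs]
  unfold mu
  omega

lemma Aval_eq : (Aval q E : ℤ) = 5 * mu q E + 4 := by
  push_cast [Aval]
  ring

lemma ten_mul_abs_elemVal_lt_Aval {u : Elem} (hu : validElem q E u) :
    10 * |elemVal q u| < Aval q E := by
  have := ten_mul_abs_elemVal_lt_mu hu
  rw [Aval_eq]
  omega

lemma taskLen_pos {t : UTask} (ht : validElem q E t.1) : 0 < taskLen q E t := by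
  have := ten_mul_abs_elemVal_lt_Aval ht
  unfold taskLen
  split_ifs <;> linarith [le_abs_self (elemVal q t.1), neg_abs_le (elemVal q t.1)]

end Bounds

lemma xnum_pos (q i : ℕ) : 0 < xnum q i := by
  unfold xnum
  positivity

lemma ynum_pos (q j : ℕ) : 0 < ynum q j := by
  unfold ynum
  positivity

lemma znum_pos (q k : ℕ) : 0 < znum q k := by
  unfold znum
  positivity

lemma hnum_neg (q : ℕ) (h : ℕ × ℕ × ℕ) : hnum q h < 0 := by
  unfold hnum
  have : (0 : ℤ) ≤ h.1 * rho q := by positivity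
  have : (0 : ℤ) ≤ h.2.1 * rho q ^ 2 := by positivity
  have : (0 : ℤ) ≤ h.2.2 * rho q ^ 3 := by positivity
  linarith

section Block

variable {q : ℕ} {E : Finset (ℕ × ℕ × ℕ)} {b : ℕ}

lemma blockStart_add_le_numEdges (hb : b < q) :
    blockStart q E b + 2 * Aval q E ≤ numEdges q E := by
  have hbq : (b : ℤ) + 1 ≤ q := by exact_mod_cast hb
  have hA : (0 : ℤ) ≤ 2 * Aval q E + 1 := by positivity
  unfold blockStart numEdges
  nlinarith

lemma cap_of_mem_block {e : ℤ} (he : e ∈ block q E b) :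
    cap q E e = if e - blockStart q E b < Aval q E
      then 4 * (Aval q E : ℤ) + 4 else 4 * (Aval q E : ℤ) := by
  rw [block, Finset.mem_Ico] at he
  have hmod : e % (2 * Aval q E + 1) = e - blockStart q E b := by
    have hdecomp : e = (e - blockStart q E b) + b * (2 * Aval q E + 1) := by
      unfold blockStart; ring
    conv_lhs => rw [hdecomp]
    rw [Int.add_mul_emod_self_right, Int.emod_eq_of_lt] <;> omega
  simp only [cap, hmod]
  split_ifs <;> omega

lemma cap_nonneg (e : ℤ) : 0 ≤ cap q E e := by
  simp only [cap]
  split_ifs <;> omega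

lemma feasible_of_sched_subset_block {S : Finset UTask} {start : UTask → ℤ} (hb : b < q)
    (hvalid : ∀ t ∈ S, validElem q E t.1) (hsub : ∀ t ∈ S, sched q E start t ⊆ block q E b)
    (hload : ∀ e ∈ block q E b,
      ∑ t ∈ S.filter (fun t => e ∈ sched q E start t), taskDem q E t ≤ cap q E e) :
    Feasible q E S start := by
  refine ⟨hvalid, fun t ht => ?_, fun e he0 heN => ?_⟩
  · have hlen := taskLen_pos (hvalid t ht)
    have hfirst := hsub t ht (Finset.mem_Ico.mpr ⟨le_rfl, by omega⟩ :
      start t ∈ sched q E start t)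
    have hlast := hsub t ht (Finset.mem_Ico.mpr ⟨by omega, by omega⟩ :
      start t + taskLen q E t - 1 ∈ sched q E start t)
    rw [block, Finset.mem_Ico] at hfirst hlast
    have : 0 ≤ blockStart q E b := by unfold blockStart; positivity
    have := blockStart_add_le_numEdges (E := E) hb
    omega
  · by_cases he : e ∈ block q E b
    · exact hload e he
    · rw [Finset.filter_false_of_mem fun t ht hmem => he (hsub t ht hmem), Finset.sum_empty]
      exact cap_nonneg e

end Block

def blockSchedule (q : ℕ) (E : Finset (ℕ × ℕ × ℕ)) (b : ℕ) (t : UTask) : ℤ :=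
  if t.2 then blockStart q E b else blockStart q E b + 2 * Aval q E - taskLen q E t

/-- The load of the tiling pair `t_L(u), t_R(u)` at offset `r` into the block, where
`v = 10u'`. -/
def pairLoad (A v r : ℤ) : ℤ :=
  if r < A - v then A + v + 1 else A - v

section BlockSchedule

variable {q : ℕ} {E : Finset (ℕ × ℕ × ℕ)} {b : ℕ} {u : Elem} {e : ℤ}

lemma mem_sched_blockSchedule_true :
    e ∈ sched q E (blockSchedule q E b) (u, true) ↔
      blockStart q E b ≤ e ∧ e - blockStart q E b < Aval q E - 10 * elemVal q u := by
  simp only [sched, blockSchedule, taskLen, Finset.mem_Ico, if_true]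
  omega

lemma mem_sched_blockSchedule_false :
    e ∈ sched q E (blockSchedule q E b) (u, false) ↔
      Aval q E - 10 * elemVal q u ≤ e - blockStart q E b ∧
        e < blockStart q E b + 2 * Aval q E := by
  simp only [sched, blockSchedule, taskLen, Finset.mem_Ico, Bool.false_eq_true, if_false]
  omega

lemma sched_blockSchedule_subset_block {s : Bool} (hu : validElem q E u) :
    sched q E (blockSchedule q E b) (u, s) ⊆ block q E b := by
  have := ten_mul_abs_elemVal_lt_Aval hu
  have := le_abs_self (elemVal q u)
  have := neg_abs_le (elemVal q u)
  cases s
  all_goals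
    intro e he
    simp only [mem_sched_blockSchedule_true, mem_sched_blockSchedule_false] at he
    rw [block, Finset.mem_Ico]
    omega

lemma load_blockSchedule_true (he : e ∈ block q E b) :
    (if e ∈ sched q E (blockSchedule q E b) (u, true) then taskDem q E (u, true) else 0) =
      if e - blockStart q E b < Aval q E - 10 * elemVal q u
      then Aval q E + 10 * elemVal q u + 1 else 0 := by
  rw [block, Finset.mem_Ico] at he
  simp only [mem_sched_blockSchedule_true, taskDem, if_true]
  split_ifs <;> omega

lemma load_blockSchedule_false (he : e ∈ block q E b) :
    (if e ∈ sched q E (blockSchedule q E b) (u, false) then taskDem q E (u, false) else 0) =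
      if Aval q E - 10 * elemVal q u ≤ e - blockStart q E b
      then Aval q E - 10 * elemVal q u else 0 := by
  rw [block, Finset.mem_Ico] at he
  simp only [mem_sched_blockSchedule_false, taskDem, Bool.false_eq_true, if_false]
  split_ifs <;> omega

lemma load_pair_blockSchedule (he : e ∈ block q E b) :
    ((if e ∈ sched q E (blockSchedule q E b) (u, true) then taskDem q E (u, true) else 0) +
      if e ∈ sched q E (blockSchedule q E b) (u, false) then taskDem q E (u, false) else 0) =
      pairLoad (Aval q E) (10 * elemVal q u) (e - blockStart q E b) := by
  rw [load_blockSchedule_true he, load_blockSchedule_false he, pairLoad]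
  split_ifs <;> omega

end BlockSchedule

section SevenTasks

variable {i j l : ℕ} {h : ℕ × ℕ × ℕ}

lemma sum_sevenTasksL {M : Type*} [AddCommMonoid M] (f : UTask → M) :
    ∑ t ∈ sevenTasksL i j l h, f t =
      (f (.X i, true) + f (.X i, false)) + (f (.Y j, true) + f (.Y j, false)) +
        (f (.Z l, true) + f (.Z l, false)) + f (.H h, true) := by
  simp only [sevenTasksL, Finset.mem_insert, Finset.mem_singleton, Prod.mk.injEq, reduceCtorEq,
    Bool.true_eq_false, Bool.false_eq_true, and_false, false_and, or_self, not_false_eq_true,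
    Finset.sum_insert, Finset.sum_singleton]
  abel

lemma sum_sevenTasksR {M : Type*} [AddCommMonoid M] (f : UTask → M) :
    ∑ t ∈ sevenTasksR i j l h, f t =
      (f (.X i, true) + f (.X i, false)) + (f (.Y j, true) + f (.Y j, false)) +
        (f (.Z l, true) + f (.Z l, false)) + f (.H h, false) := by
  simp only [sevenTasksR, Finset.mem_insert, Finset.mem_singleton, Prod.mk.injEq, reduceCtorEq,
    Bool.true_eq_false, Bool.false_eq_true, and_false, false_and, or_self, not_false_eq_true,
    Finset.sum_insert, Finset.sum_singleton]
  abel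

variable {q : ℕ} {E : Finset (ℕ × ℕ × ℕ)}

lemma validElem_of_mem_sevenTasksL (hi : i ∈ Finset.Icc 1 q) (hj : j ∈ Finset.Icc 1 q)
    (hl : l ∈ Finset.Icc 1 q) (hh : h ∈ E) {t : UTask} (ht : t ∈ sevenTasksL i j l h) :
    validElem q E t.1 := by
  simp only [sevenTasksL, Finset.mem_insert, Finset.mem_singleton] at ht
  rcases ht with rfl | rfl | rfl | rfl | rfl | rfl | rfl <;> assumption

lemma validElem_of_mem_sevenTasksR (hi : i ∈ Finset.Icc 1 q) (hj : j ∈ Finset.Icc 1 q)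
    (hl : l ∈ Finset.Icc 1 q) (hh : h ∈ E) {t : UTask} (ht : t ∈ sevenTasksR i j l h) :
    validElem q E t.1 := by
  simp only [sevenTasksR, Finset.mem_insert, Finset.mem_singleton] at ht
  rcases ht with rfl | rfl | rfl | rfl | rfl | rfl | rfl <;> assumption

end SevenTasks

lemma three_pairLoad_add_left_le {A r x y z h : ℤ} (hA : 0 ≤ A) (hx : 0 < x) (hy : 0 < y)
    (hz : 0 < z) (hsum : x + y + z + h ≤ 0) :
    pairLoad A x r + pairLoad A y r + pairLoad A z r + (if r < A - h then A + h + 1 else 0) ≤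
      if r < A then 4 * A + 4 else 4 * A := by
  unfold pairLoad
  split_ifs <;> omega

lemma three_pairLoad_add_right_le {A r x y z h : ℤ} (hh : h ≤ 0) (hsum : 0 ≤ x + y + z + h)
    (hA : x + y + z ≤ A + 1) :
    pairLoad A x r + pairLoad A y r + pairLoad A z r + (if A - h ≤ r then A - h else 0) ≤
      if r < A then 4 * A + 4 else 4 * A := by
  unfold pairLoad
  split_ifs <;> omega

section Loads

variable {q : ℕ} {E : Finset (ℕ × ℕ × ℕ)} {b i j l : ℕ} {h : ℕ × ℕ × ℕ} {e : ℤ}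

lemma load_sevenTasksL_le_cap (hsum : xnum q i + ynum q j + znum q l + hnum q h ≤ 0)
    (he : e ∈ block q E b) :
    ∑ t ∈ (sevenTasksL i j l h).filter (fun t => e ∈ sched q E (blockSchedule q E b) t),
      taskDem q E t ≤ cap q E e := by
  rw [Finset.sum_filter, sum_sevenTasksL, load_pair_blockSchedule he,
    load_pair_blockSchedule he, load_pair_blockSchedule he, load_blockSchedule_true he,
    cap_of_mem_block he]
  simp only [elemVal]
  refine three_pairLoad_add_left_le (by positivity) ?_ ?_ ?_ (by linarith)
  all_goals linarith [xnum_pos q i, ynum_pos q j, znum_pos q l]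

lemma load_sevenTasksR_le_cap (hi : i ∈ Finset.Icc 1 q) (hj : j ∈ Finset.Icc 1 q)
    (hl : l ∈ Finset.Icc 1 q) (hsum : 0 ≤ xnum q i + ynum q j + znum q l + hnum q h)
    (he : e ∈ block q E b) :
    ∑ t ∈ (sevenTasksR i j l h).filter (fun t => e ∈ sched q E (blockSchedule q E b) t),
      taskDem q E t ≤ cap q E e := by
  rw [Finset.sum_filter, sum_sevenTasksR, load_pair_blockSchedule he,
    load_pair_blockSchedule he, load_pair_blockSchedule he, load_blockSchedule_false he,
    cap_of_mem_block he]
  have hx := ten_mul_abs_elemVal_lt_mu (E := E) (u := .X i) hi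
  have hy := ten_mul_abs_elemVal_lt_mu (E := E) (u := .Y j) hj
  have hz := ten_mul_abs_elemVal_lt_mu (E := E) (u := .Z l) hl
  simp only [elemVal] at hx hy hz ⊢
  refine three_pairLoad_add_right_le (by linarith [hnum_neg q h]) (by linarith) ?_
  rw [Aval_eq]
  linarith [le_abs_self (xnum q i), le_abs_self (ynum q j), le_abs_self (znum q l)]

end Loads

lemma blockSchedule_feasible {q : ℕ} {E : Finset (ℕ × ℕ × ℕ)} {b : ℕ} {S : Finset UTask}
    (hb : b < q) (hvalid : ∀ t ∈ S, validElem q E t.1)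
    (hload : ∀ e ∈ block q E b,
      ∑ t ∈ S.filter (fun t => e ∈ sched q E (blockSchedule q E b) t), taskDem q E t ≤
        cap q E e) :
    Feasible q E S (blockSchedule q E b) ∧
      ∀ t ∈ S, sched q E (blockSchedule q E b) t ⊆ block q E b := by
  have hsub t (ht : t ∈ S) := sched_blockSchedule_subset_block (b := b) (s := t.2) (hvalid t ht)
  exact ⟨feasible_of_sched_subset_block hb hvalid hsub hload, hsub⟩

theorem seven_tasks_per_block_general (q : ℕ) (E : Finset (ℕ × ℕ × ℕ))
    (i j l : ℕ) (hi : i ∈ Finset.Icc 1 q) (hj : j ∈ Finset.Icc 1 q) (hl : l ∈ Finset.Icc 1 q)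
    (h : ℕ × ℕ × ℕ) (hh : h ∈ E) (b : ℕ) (hb : b < q) :
    ∃ start : UTask → ℤ,
      (Feasible q E (sevenTasksL i j l h) start ∧
        ∀ t ∈ sevenTasksL i j l h, sched q E start t ⊆ block q E b) ∨
      (Feasible q E (sevenTasksR i j l h) start ∧
        ∀ t ∈ sevenTasksR i j l h, sched q E start t ⊆ block q E b) := by
  refine ⟨blockSchedule q E b, ?_⟩
  rcases le_total (xnum q i + ynum q j + znum q l + hnum q h) 0 with hsum | hsum
  · exact .inl (blockSchedule_feasible hb (fun _ => validElem_of_mem_sevenTasksL hi hj hl hh)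
      fun _ => load_sevenTasksL_le_cap hsum)
  · exact .inr (blockSchedule_feasible hb (fun _ => validElem_of_mem_sevenTasksR hi hj hl hh)
      fun _ => load_sevenTasksR_le_cap hi hj hl hsum)

/-- For any nodes `x_i ∈ X`, `y_j ∈ Y`, `z_k ∈ Z`, any hyperedge `h_ℓ ∈ E` (not necessarily
with `h_ℓ = (x_i, y_j, z_k)`) and any block `I` of `σ(K)`, there is a feasible schedule inside
`I` of either the seven tasks `t_L(x_i), t_R(x_i), t_L(y_j), t_R(y_j), t_L(z_k), t_R(z_k),
t_L(h_ℓ)`, or the seven tasks `t_L(x_i), t_R(x_i), t_L(y_j), t_R(y_j), t_L(z_k), t_R(z_k),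
t_R(h_ℓ)`. -/
theorem seven_tasks_per_block (q : ℕ) (E : Finset (ℕ × ℕ × ℕ)) (hE : ValidE q E)
    (i j l : ℕ) (hi : i ∈ Finset.Icc 1 q) (hj : j ∈ Finset.Icc 1 q) (hl : l ∈ Finset.Icc 1 q)
    (h : ℕ × ℕ × ℕ) (hh : h ∈ E) (b : ℕ) (hb : b < q) :
    ∃ start : UTask → ℤ,
      (Feasible q E (sevenTasksL i j l h) start ∧
        ∀ t ∈ sevenTasksL i j l h, sched q E start t ⊆ block q E b) ∨
      (Feasible q E (sevenTasksR i j l h) start ∧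
        ∀ t ∈ sevenTasksR i j l h, sched q E start t ⊆ block q E b) :=
  seven_tasks_per_block_general q E i j l hi hj hl h hh b hb
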